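/- arXiv:1811.09312 — 2 statements merged into one kernel-verified Lean document; each statement's English description precedes it below -/
import Mathlib

section
/- Given moment equations M₁ = μ, M₂ = σ²/(2τ) + ω², M₃ = (σ²/(2τ)) e^{−τΔ}, M₄ = (σ²/(2τ)) e^{−2τΔ} with Δ > 0, M₃ > M₄ > 0, the unique solution is μ = M₁, τ = (1/Δ) log(M₃/M₄), σ² = (2/Δ)(M₃²/M₄) log(M₃/M₄), ω² = M₂ − M₃²/M₄. -/
open Real

/-- Method of moments for the noisy OU process: given the moment equations
`M₁ = μ`, `M₂ = σ²/(2τ) + ω²`, `M₃ = (σ²/(2τ)) e^{−τΔ}`, `M₄ = (σ²/(2τ)) e^{−2τΔ}` with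
`Δ > 0` and `M₃ > M₄ > 0`, the unique solution is `μ = M₁`, `τ = (1/Δ) log(M₃/M₄)`,
`σ² = (2/Δ)(M₃²/M₄) log(M₃/M₄)`, `ω² = M₂ − M₃²/M₄`. -/
theorem noisy_OU_method_of_moments_solution
    (Δ M1 M2 M3 M4 : ℝ) (hΔ : 0 < Δ) (h34 : M4 < M3) (h4 : 0 < M4)
    (μ τ σ2 ω2 : ℝ)
    (h1 : M1 = μ) (h2 : M2 = σ2 / (2 * τ) + ω2)
    (h3 : M3 = σ2 / (2 * τ) * Real.exp (-τ * Δ))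
    (h4e : M4 = σ2 / (2 * τ) * Real.exp (-2 * τ * Δ)) :
    μ = M1 ∧
    τ = (1 / Δ) * Real.log (M3 / M4) ∧
    σ2 = (2 / Δ) * (M3 ^ 2 / M4) * Real.log (M3 / M4) ∧
    ω2 = M2 - M3 ^ 2 / M4 := by
  set A := σ2 / (2 * τ) with hA
  have hApos : 0 < A := by
    have he : 0 < Real.exp (-2 * τ * Δ) := Real.exp_pos _
    nlinarith [h4e]
  have hτ : τ ≠ 0 := by
    intro h
    rw [h] at hA
    simp [hA] at hApos
  have hM3pos : 0 < M3 := lt_trans h4 h34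
  have hratio : M3 / M4 = Real.exp (τ * Δ) := by
    rw [h3, h4e, div_eq_iff (by positivity),
      show (-τ * Δ) = τ * Δ + (-2 * τ * Δ) by ring, Real.exp_add]
    ring
  have hlog : Real.log (M3 / M4) = τ * Δ := by
    rw [hratio, Real.log_exp]
  have hτeq : τ = (1 / Δ) * Real.log (M3 / M4) := by
    rw [hlog]; field_simp
  have hAeq : A = M3 ^ 2 / M4 := by
    have : M3 ^ 2 = A * M4 := by
      rw [h3, h4e, show (-2 * τ * Δ) = (-τ * Δ) + (-τ * Δ) by ring, Real.exp_add]; ring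
    rw [this]; field_simp
  have hσ : σ2 = (2 / Δ) * (M3 ^ 2 / M4) * Real.log (M3 / M4) := by
    have hσA : σ2 = A * (2 * τ) := by
      rw [hA]; field_simp
    rw [hσA, hAeq, hlog]; field_simp
  refine ⟨h1.symm, hτeq, hσ, ?_⟩
  rw [h2, ← hAeq]; ring
end

section
/- Given equations α = μ(1 − e^{−τΔ}), φ = e^{−τΔ}, γ²(1+θ²) = (σ²/(2τ))(1 − e^{−2τΔ}) + ω²(1 + e^{−2τΔ}), θγ² = −ω² e^{−τΔ}, with 0 < φ < 1, γ² > 0, θ < 0, and Δ > 0, the solution is μ = α/(1−φ), τ = −(1/Δ) log φ, σ² = −(2/Δ) · γ²(φ + θ²φ + θφ² + θ)/(φ(1−φ²)) · log φ, ω² = −θγ²/φ. -/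
open Real

theorem eq_neg_one_div_mul_log_of_eq_exp {Δ τ φ : ℝ} (hΔ : Δ ≠ 0) (hφ : φ = exp (-τ * Δ)) :
    τ = -(1 / Δ) * log φ := by
  rw [hφ, log_exp]
  field_simp

theorem exp_neg_two_mul_mul_eq_sq {Δ τ φ : ℝ} (hφ : φ = exp (-τ * Δ)) :
    exp (-2 * τ * Δ) = φ ^ 2 := by
  rw [hφ, ← exp_nat_mul]
  ring_nf

theorem ne_zero_of_exp_neg_mul_ne_one {Δ τ φ : ℝ} (hφ : φ = exp (-τ * Δ)) (hφ1 : φ ≠ 1) :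
    τ ≠ 0 := by
  rintro rfl
  simp [hφ] at hφ1

/-- Solving the lag-zero autocovariance equation of the ARMA(1,1) model for the diffusion
variance, once the noise variance `ω2` is known from the lag-one equation. -/
theorem eq_of_autocovariance_eq {τ φ θ γ2 σ2 : ℝ} (hτ : τ ≠ 0) (hφ : φ ≠ 0)
    (hφ2 : 1 - φ ^ 2 ≠ 0)
    (h : γ2 * (1 + θ ^ 2) = σ2 / (2 * τ) * (1 - φ ^ 2) + -(θ * γ2) / φ * (1 + φ ^ 2)) :
    σ2 = 2 * τ * (γ2 * (φ + θ ^ 2 * φ + θ * φ ^ 2 + θ) / (φ * (1 - φ ^ 2))) := by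
  field_simp at h ⊢
  linear_combination -h

theorem ARMA11_reparametrization_solution_general
    (Δ α φ θ γ2 μ τ σ2 ω2 : ℝ) (hΔ : 0 < Δ) (hφ0 : 0 < φ) (hφ1 : φ < 1)
    (h1 : α = μ * (1 - Real.exp (-τ * Δ)))
    (h2 : φ = Real.exp (-τ * Δ))
    (h3 : γ2 * (1 + θ ^ 2) =
      σ2 / (2 * τ) * (1 - Real.exp (-2 * τ * Δ)) + ω2 * (1 + Real.exp (-2 * τ * Δ)))
    (h4 : θ * γ2 = -ω2 * Real.exp (-τ * Δ)) :
    μ = α / (1 - φ) ∧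
    τ = -(1 / Δ) * Real.log φ ∧
    σ2 = -(2 / Δ) * (γ2 * (φ + θ ^ 2 * φ + θ * φ ^ 2 + θ) / (φ * (1 - φ ^ 2))) *
      Real.log φ ∧
    ω2 = -(θ * γ2) / φ := by
  rw [← h2] at h1 h4
  rw [exp_neg_two_mul_mul_eq_sq h2] at h3
  have hτ := eq_neg_one_div_mul_log_of_eq_exp hΔ.ne' h2
  have hω : ω2 = -(θ * γ2) / φ := by
    rw [h4]
    field_simp
  have hφ2 : 1 - φ ^ 2 ≠ 0 := by nlinarith
  rw [hω] at h3
  refine ⟨by rw [h1]; field_simp [sub_ne_zero.mpr hφ1.ne'], hτ, ?_, hω⟩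
  rw [eq_of_autocovariance_eq (ne_zero_of_exp_neg_mul_ne_one h2 hφ1.ne) hφ0.ne' hφ2 h3, hτ]
  ring

/-- ARMA(1,1) reparametrization of the noisy discretized equidistant OU process: given
`α = μ(1 − e^{−τΔ})`, `φ = e^{−τΔ}`, `γ²(1+θ²) = (σ²/(2τ))(1 − e^{−2τΔ}) + ω²(1 + e^{−2τΔ})`,
`θγ² = −ω² e^{−τΔ}`, with `0 < φ < 1`, `γ² > 0`, `θ < 0` and `Δ > 0`, the solution is
`μ = α/(1−φ)`, `τ = −(1/Δ) log φ`,
`σ² = −(2/Δ) γ²(φ + θ²φ + θφ² + θ)/(φ(1−φ²)) log φ`, `ω² = −θγ²/φ`. -/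
theorem ARMA11_reparametrization_solution
    (Δ α φ θ γ2 μ τ σ2 ω2 : ℝ) (hΔ : 0 < Δ) (hφ0 : 0 < φ) (hφ1 : φ < 1)
    (hγ : 0 < γ2) (hθ : θ < 0)
    (h1 : α = μ * (1 - Real.exp (-τ * Δ)))
    (h2 : φ = Real.exp (-τ * Δ))
    (h3 : γ2 * (1 + θ ^ 2) =
      σ2 / (2 * τ) * (1 - Real.exp (-2 * τ * Δ)) + ω2 * (1 + Real.exp (-2 * τ * Δ)))
    (h4 : θ * γ2 = -ω2 * Real.exp (-τ * Δ)) :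
    μ = α / (1 - φ) ∧
    τ = -(1 / Δ) * Real.log φ ∧
    σ2 = -(2 / Δ) * (γ2 * (φ + θ ^ 2 * φ + θ * φ ^ 2 + θ) / (φ * (1 - φ ^ 2))) *
      Real.log φ ∧
    ω2 = -(θ * γ2) / φ :=
  ARMA11_reparametrization_solution_general Δ α φ θ γ2 μ τ σ2 ω2 hΔ hφ0 hφ1 h1 h2 h3 h4
end
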